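/- arXiv:1605.09227 — 3 statements merged into one kernel-verified Lean document; each statement's English description precedes it below -/
import Mathlib

section
/- Let n ∈ ℕ, let f : 2^[n] → ℝ≥0 be a set function, let α ≥ 1, and let D be a probability distribution on 2^[n]. There is an absolute constant C > 0 such that for all ε, δ ∈ (0,1) and every integer m ≥ C·(1/ε)·log(1/(ε·δ)), with probability at least 1−δ over an i.i.d. sample S₁,…,S_m ∼ D the following holds: Pr_{S,S'∼D}[ α·f(S) < f(S') and there exist no indices i,j ∈ [m] with f(S) ≤ f(S_i), α·f(S_i) < f(S_j), and f(S_j) ≤ f(S') ] ≤ ε. -/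
open scoped Classical
open Finset

/-- Probability, under two independent draws from `D`, that the pair `(S, S')` satisfies `P`. -/
noncomputable def pairPr (n : ℕ) (D : Finset (Fin n) → ℝ)
    (P : Finset (Fin n) → Finset (Fin n) → Prop) : ℝ :=
  ∑ S : Finset (Fin n), ∑ S' : Finset (Fin n), if P S S' then D S * D S' else 0

/-- Probability, under `m` i.i.d. draws from `D`, that the sample satisfies `P`. -/
noncomputable def samplePr (n m : ℕ) (D : Finset (Fin n) → ℝ)
    (P : (Fin m → Finset (Fin n)) → Prop) : ℝ :=
  ∑ s : Fin m → Finset (Fin n), if P s then ∏ i, D (s i) else 0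

/-- Comparison bits of the sample `s` under the target set function `f`:
`bits n m f s i j = true` iff `f (s i) ≤ f (s j)`. -/
noncomputable def bits (n m : ℕ) (f : Finset (Fin n) → ℝ)
    (s : Fin m → Finset (Fin n)) : Fin m → Fin m → Bool :=
  fun i j => decide (f (s i) ≤ f (s j))

/-!
Call a sample a `c`-net if every order-connected set of values of `f` containing no sample value
has `D`-mass at most `c`. If the landmarks miss a pair `(S, S')`, then either `f S` lies in a
sample-free interval determined by `f S'`, or `f S'` lies in one determined by `f S`, so a `c`-net
misses a random pair with probability at most `2c`. A set of mass above `2η` contains one of the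
`⌊1/η⌋` blocks between consecutive `η`-quantiles, each of mass at least `η`; hence `m` samples fail
to be a `2η`-net with probability at most `(1/η)(1 - η)^m ≤ e^{-ηm}/η`, and `η = ε/4` suffices.
For `ε ≥ 1/2` no landmarks are needed: `P(f S < f S') ≤ 1/2` by symmetry.
-/

namespace LandmarkBucket

section Prob

variable {β : Type*} [Fintype β] {D : β → ℝ}

noncomputable def prob (D : β → ℝ) (A : β → Prop) : ℝ :=
  ∑ x, if A x then D x else 0

lemma prob_nonneg (hD : ∀ x, 0 ≤ D x) (A : β → Prop) : 0 ≤ prob D A :=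
  Finset.sum_nonneg fun x _ => by split_ifs <;> simp [hD x]

lemma prob_mono (hD : ∀ x, 0 ≤ D x) {A B : β → Prop} (h : ∀ x, A x → B x) :
    prob D A ≤ prob D B :=
  Finset.sum_le_sum fun x _ => by
    by_cases hA : A x
    · simp [hA, h x hA]
    · split_ifs <;> simp [hD x]

lemma prob_eq_zero {A : β → Prop} (h : ∀ x, ¬ A x) : prob D A = 0 :=
  Finset.sum_eq_zero fun x _ => if_neg (h x)

lemma prob_true (hD1 : ∑ x, D x = 1) : prob D (fun _ => True) = 1 := by
  simpa [prob] using hD1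

lemma prob_le_one (hD : ∀ x, 0 ≤ D x) (hD1 : ∑ x, D x = 1) (A : β → Prop) : prob D A ≤ 1 :=
  prob_true hD1 ▸ prob_mono hD fun _ _ => trivial

lemma prob_or_le (hD : ∀ x, 0 ≤ D x) (A B : β → Prop) :
    prob D (fun x => A x ∨ B x) ≤ prob D A + prob D B := by
  rw [prob, prob, prob, ← Finset.sum_add_distrib]
  refine Finset.sum_le_sum fun x _ => ?_
  by_cases hA : A x <;> by_cases hB : B x <;> simp [hA, hB, hD x]

lemma prob_or_of_disjoint {A B : β → Prop} (h : ∀ x, A x → ¬ B x) :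
    prob D (fun x => A x ∨ B x) = prob D A + prob D B := by
  rw [prob, prob, prob, ← Finset.sum_add_distrib]
  refine Finset.sum_congr rfl fun x _ => ?_
  by_cases hA : A x
  · simp [hA, h x hA]
  · simp [hA]

lemma prob_not (hD1 : ∑ x, D x = 1) (A : β → Prop) : prob D (fun x => ¬ A x) = 1 - prob D A := by
  have h := prob_or_of_disjoint (D := D) (A := A) (B := fun x => ¬ A x) fun _ h hn => hn h
  simp only [em, prob_true hD1] at h
  linarith

end Prob

section Pair

variable {n : ℕ} {D : Finset (Fin n) → ℝ}

lemma pairPr_eq_sum_mul_prob (P : Finset (Fin n) → Finset (Fin n) → Prop) :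
    pairPr n D P = ∑ S, D S * prob D (P S) := by
  refine Finset.sum_congr rfl fun S _ => ?_
  rw [prob, Finset.mul_sum]
  exact Finset.sum_congr rfl fun S' _ => by split_ifs <;> simp

lemma pairPr_swap (P : Finset (Fin n) → Finset (Fin n) → Prop) :
    pairPr n D (fun S S' => P S' S) = pairPr n D P := by
  rw [pairPr, Finset.sum_comm]
  exact Finset.sum_congr rfl fun S _ => Finset.sum_congr rfl fun S' _ => by
    split_ifs <;> simp [mul_comm]

lemma pairPr_le_of_forall_prob_le (hD : ∀ S, 0 ≤ D S) (hD1 : ∑ S, D S = 1)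
    {P : Finset (Fin n) → Finset (Fin n) → Prop} {c : ℝ} (h : ∀ S, prob D (P S) ≤ c) :
    pairPr n D P ≤ c := by
  rw [pairPr_eq_sum_mul_prob]
  calc ∑ S, D S * prob D (P S) ≤ ∑ S, D S * c :=
        Finset.sum_le_sum fun S _ => mul_le_mul_of_nonneg_left (h S) (hD S)
    _ = c := by rw [← Finset.sum_mul, hD1, one_mul]

lemma pairPr_mono (hD : ∀ S, 0 ≤ D S) {P Q : Finset (Fin n) → Finset (Fin n) → Prop}
    (h : ∀ S S', P S S' → Q S S') : pairPr n D P ≤ pairPr n D Q := by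
  simp only [pairPr_eq_sum_mul_prob]
  exact Finset.sum_le_sum fun S _ =>
    mul_le_mul_of_nonneg_left (prob_mono hD (h S)) (hD S)

lemma pairPr_or_le (hD : ∀ S, 0 ≤ D S) (P Q : Finset (Fin n) → Finset (Fin n) → Prop) :
    pairPr n D (fun S S' => P S S' ∨ Q S S') ≤ pairPr n D P + pairPr n D Q := by
  simp only [pairPr_eq_sum_mul_prob, ← Finset.sum_add_distrib, ← mul_add]
  exact Finset.sum_le_sum fun S _ =>
    mul_le_mul_of_nonneg_left (prob_or_le hD (P S) (Q S)) (hD S)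

lemma pairPr_or_of_disjoint {P Q : Finset (Fin n) → Finset (Fin n) → Prop}
    (h : ∀ S S', P S S' → ¬ Q S S') :
    pairPr n D (fun S S' => P S S' ∨ Q S S') = pairPr n D P + pairPr n D Q := by
  simp only [pairPr_eq_sum_mul_prob, ← Finset.sum_add_distrib, ← mul_add]
  exact Finset.sum_congr rfl fun S _ => by rw [prob_or_of_disjoint (h S)]

lemma pairPr_lt_le_half (hD : ∀ S, 0 ≤ D S) (hD1 : ∑ S, D S = 1) (g : Finset (Fin n) → ℝ) :
    pairPr n D (fun S S' => g S < g S') ≤ 1 / 2 := by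
  have hsum : pairPr n D (fun S S' => g S < g S' ∨ g S' < g S) ≤ 1 :=
    pairPr_le_of_forall_prob_le hD hD1 fun _ => prob_le_one hD hD1 _
  rw [pairPr_or_of_disjoint fun S S' h => not_lt.mpr h.le,
    pairPr_swap (fun S S' => g S < g S')] at hsum
  linarith

end Pair

section Sample

variable {n m : ℕ} {D : Finset (Fin n) → ℝ}

lemma samplePr_mono (hD : ∀ S, 0 ≤ D S) {P Q : (Fin m → Finset (Fin n)) → Prop}
    (h : ∀ s, P s → Q s) : samplePr n m D P ≤ samplePr n m D Q :=
  Finset.sum_le_sum fun s _ => by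
    have hs : 0 ≤ ∏ i, D (s i) := Finset.prod_nonneg fun i _ => hD (s i)
    by_cases hP : P s
    · simp [hP, h s hP]
    · split_ifs <;> simp [hs]

lemma samplePr_forall (A : Finset (Fin n) → Prop) :
    samplePr n m D (fun s => ∀ i, A (s i)) = prob D A ^ m := by
  rw [prob, ← Fin.prod_const, Fintype.prod_sum]
  refine Finset.sum_congr rfl fun s _ => ?_
  by_cases hA : ∀ i, A (s i)
  · simp [hA]
  · obtain ⟨i, hi⟩ := not_forall.mp hA
    rw [if_neg hA, eq_comm]
    exact Finset.prod_eq_zero (Finset.mem_univ i) (if_neg hi)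

lemma samplePr_true (hD1 : ∑ S, D S = 1) : samplePr n m D (fun _ => True) = 1 := by
  simpa [prob_true hD1] using samplePr_forall (m := m) (D := D) (fun _ => True)

lemma samplePr_not (hD1 : ∑ S, D S = 1) (P : (Fin m → Finset (Fin n)) → Prop) :
    samplePr n m D (fun s => ¬ P s) = 1 - samplePr n m D P := by
  rw [← samplePr_true (m := m) hD1, samplePr, samplePr, samplePr, eq_sub_iff_add_eq,
    ← Finset.sum_add_distrib]
  exact Finset.sum_congr rfl fun s _ => by by_cases hP : P s <;> simp [hP]

lemma samplePr_exists_le (hD : ∀ S, 0 ≤ D S) {ι : Type*} (t : Finset ι)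
    (B : ι → (Fin m → Finset (Fin n)) → Prop) :
    samplePr n m D (fun s => ∃ k ∈ t, B k s) ≤ ∑ k ∈ t, samplePr n m D (B k) := by
  simp only [samplePr]
  rw [Finset.sum_comm]
  refine Finset.sum_le_sum fun s _ => ?_
  have hs : 0 ≤ ∏ i, D (s i) := Finset.prod_nonneg fun i _ => hD (s i)
  split_ifs with h
  · obtain ⟨k, hk, hB⟩ := h
    refine le_trans (le_of_eq (if_pos hB).symm) (Finset.single_le_sum (f := fun k =>
      if B k s then ∏ i, D (s i) else 0) (fun k _ => ?_) hk)
    split_ifs <;> simp [hs]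
  · exact Finset.sum_nonneg fun k _ => by split_ifs <;> simp [hs]

lemma one_sub_card_mul_le_samplePr_hit_all (hD : ∀ S, 0 ≤ D S) (hD1 : ∑ S, D S = 1)
    {ι : Type*} (t : Finset ι) (E : ι → Finset (Fin n) → Prop) {η : ℝ}
    (hE : ∀ k ∈ t, η ≤ prob D (E k)) :
    1 - t.card * (1 - η) ^ m ≤ samplePr n m D (fun s => ∀ k ∈ t, ∃ i, E k (s i)) := by
  have hmiss : ∀ k ∈ t, samplePr n m D (fun s => ∀ i, ¬ E k (s i)) ≤ (1 - η) ^ m := by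
    intro k hk
    rw [samplePr_forall (fun S => ¬ E k S), prob_not hD1]
    exact pow_le_pow_left₀ (by linarith [prob_le_one hD hD1 (E k)]) (by linarith [hE k hk]) m
  have hunion := samplePr_exists_le hD t (fun k (s : Fin m → _) => ∀ i, ¬ E k (s i))
  have hsum := Finset.sum_le_sum hmiss
  rw [Finset.sum_const, nsmul_eq_mul] at hsum
  have hcompl := samplePr_not hD1 (m := m) (fun s => ∀ k ∈ t, ∃ i, E k (s i))
  simp only [not_forall, not_exists, exists_prop] at hcompl
  linarith

end Sample

section Quantile

variable {β : Type*} [Fintype β] {D : β → ℝ} (f : β → ℝ)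

lemma prob_cdf_lt_le (hD : ∀ x, 0 ≤ D x) {t : ℝ} (ht : 0 ≤ t) :
    prob D (fun x => prob D (fun y => f y ≤ f x) < t) ≤ t := by
  by_cases hne : (Finset.univ.filter fun x => prob D (fun y => f y ≤ f x) < t).Nonempty
  · obtain ⟨x₀, hx₀, hmax⟩ := Finset.exists_max_image _ f hne
    calc prob D (fun x => prob D (fun y => f y ≤ f x) < t)
        ≤ prob D (fun y => f y ≤ f x₀) :=
          prob_mono hD fun x hx => hmax x (by simpa using hx)
      _ ≤ t := (Finset.mem_filter.mp hx₀).2.le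
  · rw [prob_eq_zero fun x hx => hne ⟨x, by simpa using hx⟩]
    exact ht

lemma prob_le_cdf_lt_le (hD : ∀ x, 0 ≤ D x) (hD1 : ∑ x, D x = 1) {t : ℝ} (ht : t ≤ 1) :
    prob D (fun x => t ≤ prob D (fun y => f y < f x)) ≤ 1 - t := by
  by_cases hne : (Finset.univ.filter fun x => t ≤ prob D (fun y => f y < f x)).Nonempty
  · obtain ⟨x₀, hx₀, hmin⟩ := Finset.exists_min_image _ f hne
    calc prob D (fun x => t ≤ prob D (fun y => f y < f x))
        ≤ prob D (fun y => ¬ f y < f x₀) :=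
          prob_mono hD fun x hx => not_lt.mpr (hmin x (by simpa using hx))
      _ ≤ 1 - t := by
          rw [prob_not hD1]
          linarith [(Finset.mem_filter.mp hx₀).2]
  · rw [prob_eq_zero fun x hx => hne ⟨x, by simpa using hx⟩]
    linarith

/-- The values of `f` lying between its `a`- and `b`-quantiles under `D`. -/
def quantileBlock (D : β → ℝ) (a b : ℝ) : Set ℝ :=
  {v | a ≤ prob D (fun x => f x ≤ v) ∧ prob D (fun x => f x < v) < b}

lemma sub_le_prob_quantileBlock (hD : ∀ x, 0 ≤ D x) (hD1 : ∑ x, D x = 1) {a b : ℝ}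
    (ha : 0 ≤ a) (hb : b ≤ 1) : b - a ≤ prob D (fun x => f x ∈ quantileBlock f D a b) := by
  have hlt : b ≤ prob D (fun x => prob D (fun y => f y < f x) < b) := by
    have h := prob_not hD1 (fun x => b ≤ prob D (fun y => f y < f x))
    simp only [not_le] at h
    linarith [prob_le_cdf_lt_le f hD hD1 hb]
  have hsplit : prob D (fun x => prob D (fun y => f y < f x) < b) ≤
      prob D (fun x => f x ∈ quantileBlock f D a b) +
        prob D (fun x => prob D (fun y => f y ≤ f x) < a) :=
    (prob_mono hD fun x hx => (le_or_gt a _).imp (fun h => ⟨h, hx⟩) id).trans (prob_or_le hD _ _)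
  linarith [prob_cdf_lt_le f hD ha]

lemma quantileBlock_subset (hD : ∀ x, 0 ≤ D x) {I : Set ℝ} (hI : I.OrdConnected)
    {lo hi a b : ℝ} (hlo : lo ∈ I) (hhi : hi ∈ I) (ha : prob D (fun x => f x < lo) < a)
    (hb : b ≤ prob D (fun x => f x ≤ hi)) : quantileBlock f D a b ⊆ I := by
  rintro v ⟨hav, hvb⟩
  refine hI.out hlo hhi ⟨le_of_not_gt fun hvlo => ?_, le_of_not_gt fun hhiv => ?_⟩
  · linarith [prob_mono hD (A := fun x => f x ≤ v) fun x hx => hx.trans_lt hvlo]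
  · linarith [prob_mono hD (A := fun x => f x ≤ hi) fun x hx => hx.trans_lt hhiv]

lemma exists_quantileBlock_subset (hD : ∀ x, 0 ≤ D x) (hD1 : ∑ x, D x = 1) {I : Set ℝ}
    (hI : I.OrdConnected) {η : ℝ} (hη : 0 < η) (hmass : 2 * η < prob D (fun x => f x ∈ I)) :
    ∃ k ∈ Finset.range ⌊1 / η⌋₊, quantileBlock f D (k * η) ((k + 1) * η) ⊆ I := by
  have hne : (Finset.univ.filter fun x => f x ∈ I).Nonempty := by
    by_contra hemp
    rw [prob_eq_zero fun x hx => hemp ⟨x, by simpa using hx⟩] at hmass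
    linarith
  obtain ⟨lo, hlo, hmin⟩ := Finset.exists_min_image _ f hne
  obtain ⟨hi, hhi, hmax⟩ := Finset.exists_max_image _ f hne
  simp only [Finset.mem_filter, Finset.mem_univ, true_and] at hlo hhi hmin hmax
  set p := prob D (fun x => f x < f lo)
  have hspan : p + prob D (fun x => f x ∈ I) ≤ prob D (fun x => f x ≤ f hi) := by
    rw [← prob_or_of_disjoint fun x hx hxI => (hmin x hxI).not_gt hx]
    exact prob_mono hD fun x hx => hx.elim (fun h => (h.trans_le (hmin hi hhi)).le) (hmax x)
  have hfloor := Nat.floor_le (div_nonneg (prob_nonneg hD _) hη.le : 0 ≤ p / η)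
  have hfloor' := Nat.lt_floor_add_one (p / η)
  rw [le_div_iff₀ hη] at hfloor
  rw [div_lt_iff₀ hη] at hfloor'
  have htop : ((⌊p / η⌋₊ + 1 : ℕ) + 1) * η ≤ prob D (fun x => f x ≤ f hi) := by
    push_cast
    linarith
  refine ⟨⌊p / η⌋₊ + 1, Finset.mem_range.mpr ?_,
    quantileBlock_subset f hD hI hlo hhi (by push_cast; linarith) htop⟩
  refine Nat.lt_of_lt_of_le (Nat.lt_succ_self _) (Nat.le_floor ?_)
  rw [le_div_iff₀ hη]
  exact_mod_cast htop.trans (prob_le_one hD hD1 _)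

def IsNet (D : β → ℝ) (c : ℝ) {m : ℕ} (s : Fin m → β) : Prop :=
  ∀ I : Set ℝ, I.OrdConnected → (∀ i, f (s i) ∉ I) → prob D (fun x => f x ∈ I) ≤ c

lemma isNet_of_forall_exists_mem_quantileBlock (hD : ∀ x, 0 ≤ D x) (hD1 : ∑ x, D x = 1)
    {η : ℝ} (hη : 0 < η) {m : ℕ} {s : Fin m → β}
    (hs : ∀ k ∈ Finset.range ⌊1 / η⌋₊, ∃ i, f (s i) ∈ quantileBlock f D (k * η) ((k + 1) * η)) :
    IsNet f D (2 * η) s := by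
  intro I hI hfree
  by_contra! hmass
  obtain ⟨k, hk, hsub⟩ := exists_quantileBlock_subset f hD hD1 hI hη hmass
  obtain ⟨i, hi⟩ := hs k hk
  exact hfree i (hsub hi)

end Quantile

lemma one_sub_mul_le_samplePr_isNet {n m : ℕ} {D : Finset (Fin n) → ℝ} (hD : ∀ S, 0 ≤ D S)
    (hD1 : ∑ S, D S = 1) (f : Finset (Fin n) → ℝ) {η : ℝ} (hη : 0 < η) :
    1 - ⌊1 / η⌋₊ * (1 - η) ^ m ≤ samplePr n m D (IsNet f D (2 * η)) := by
  have hblock : ∀ k ∈ Finset.range ⌊1 / η⌋₊,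
      η ≤ prob D (fun x => f x ∈ quantileBlock f D (k * η) ((k + 1) * η)) := by
    intro k hk
    have hk1 : ((k + 1 : ℕ) : ℝ) ≤ 1 / η :=
      (Nat.cast_le.mpr (Finset.mem_range.mp hk)).trans (Nat.floor_le (by positivity))
    rw [le_div_iff₀ hη] at hk1
    push_cast at hk1
    linarith [sub_le_prob_quantileBlock f hD hD1 (by positivity : (0 : ℝ) ≤ k * η) hk1]
  have hhit := one_sub_card_mul_le_samplePr_hit_all (m := m) hD hD1 _ _ hblock
  rw [Finset.card_range] at hhit
  exact hhit.trans (samplePr_mono hD fun _ hs =>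
    isNet_of_forall_exists_mem_quantileBlock f hD hD1 hη hs)

lemma pairPr_missed_le_of_isNet {n m : ℕ} {D : Finset (Fin n) → ℝ} (hD : ∀ S, 0 ≤ D S)
    (hD1 : ∑ S, D S = 1) {f : Finset (Fin n) → ℝ} {α c : ℝ} (hα : 0 ≤ α)
    {s : Fin m → Finset (Fin n)} (hs : IsNet f D c s) :
    pairPr n D (fun S S' => α * f S < f S' ∧
      ¬ ∃ i j : Fin m, f S ≤ f (s i) ∧ α * f (s i) < f (s j) ∧ f (s j) ≤ f S') ≤ 2 * c := by
  let below (y : ℝ) : Set ℝ :=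
    {x | α * x < y} ∩ {x | ∀ i, ¬ (x ≤ f (s i) ∧ α * f (s i) < y)}
  let above (x : ℝ) : Set ℝ := {y | ∃ i, x ≤ f (s i) ∧ α * f (s i) < y} ∩
    {y | ¬ ∃ i j, x ≤ f (s i) ∧ α * f (s i) < f (s j) ∧ f (s j) ≤ y}
  have hbelow (y : ℝ) : prob D (fun x => f x ∈ below y) ≤ c :=
    hs _ ((IsLowerSet.ordConnected fun _ _ hba ha =>
        (mul_le_mul_of_nonneg_left hba hα).trans_lt ha).inter
      (IsUpperSet.ordConnected fun _ _ hab ha i hi => ha i ⟨hab.trans hi.1, hi.2⟩))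
      fun k hk => hk.2 k ⟨le_rfl, hk.1⟩
  have habove (x : ℝ) : prob D (fun y => f y ∈ above x) ≤ c :=
    hs _ ((IsUpperSet.ordConnected fun _ _ hab ha =>
        Exists.imp (fun _ hi => ⟨hi.1, hi.2.trans_le hab⟩) ha).inter
      (IsLowerSet.ordConnected fun _ _ hba ha ⟨i, j, h₁, h₂, h₃⟩ =>
        ha ⟨i, j, h₁, h₂, h₃.trans hba⟩))
      fun k hk => by
        obtain ⟨⟨i, hi, hlt⟩, hno⟩ := hk
        exact hno ⟨i, k, hi, hlt, le_rfl⟩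
  calc _ ≤ pairPr n D (fun S S' => f S ∈ below (f S') ∨ f S' ∈ above (f S)) := by
        refine pairPr_mono hD fun S S' ⟨hlt, hno⟩ => ?_
        by_cases h : ∃ i, f S ≤ f (s i) ∧ α * f (s i) < f S'
        · exact Or.inr ⟨h, hno⟩
        · exact Or.inl ⟨hlt, fun i hi => h ⟨i, hi⟩⟩
    _ ≤ pairPr n D (fun S S' => f S ∈ below (f S')) + pairPr n D (fun S S' => f S' ∈ above (f S)) :=
        pairPr_or_le hD _ _
    _ ≤ c + c := by
        gcongr
        · rw [← pairPr_swap]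
          exact pairPr_le_of_forall_prob_le hD hD1 fun S => hbelow (f S)
        · exact pairPr_le_of_forall_prob_le hD hD1 fun S => habove (f S)
    _ = 2 * c := by ring

lemma floor_mul_one_sub_pow_le {ε δ : ℝ} (hε : 0 < ε) (hε2 : ε < 1 / 2) (hδ : 0 < δ) (hδ1 : δ ≤ 1)
    {m : ℕ} (hm : 12 * (1 / ε) * Real.log (1 / (ε * δ)) ≤ m) :
    ⌊1 / (ε / 4)⌋₊ * (1 - ε / 4) ^ m ≤ δ := by
  set L := Real.log (1 / (ε * δ))
  have hεδ : 0 < ε * δ := mul_pos hε hδ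
  have hL : Real.log 2 ≤ L := by
    refine Real.log_le_log two_pos ?_
    rw [le_div_iff₀ hεδ]
    nlinarith
  have hmL : 3 * L ≤ ε / 4 * m := by
    have := mul_le_mul_of_nonneg_left hm (by positivity : (0 : ℝ) ≤ ε / 4)
    field_simp at this ⊢
    linarith
  have hlog : Real.log (ε * δ / 4) = -L - 2 * Real.log 2 := by
    rw [Real.log_div hεδ.ne' four_ne_zero, show (4 : ℝ) = 2 ^ 2 by norm_num, Real.log_pow]
    simp only [L, one_div, Real.log_inv]
    push_cast
    ring
  have hexp : Real.exp (-(ε / 4 * m)) ≤ ε * δ / 4 := by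
    rw [← Real.exp_log (by positivity : 0 < ε * δ / 4), Real.exp_le_exp, hlog]
    linarith
  have hpow : (1 - ε / 4) ^ m ≤ Real.exp (-(ε / 4 * m)) := by
    rw [show -(ε / 4 * m) = m * -(ε / 4) by ring, Real.exp_nat_mul]
    exact pow_le_pow_left₀ (by linarith) (Real.one_sub_le_exp_neg _) m
  have hfloor : (⌊1 / (ε / 4)⌋₊ : ℝ) ≤ 4 / ε := by
    simpa using Nat.floor_le (by positivity : (0 : ℝ) ≤ 1 / (ε / 4))
  calc (⌊1 / (ε / 4)⌋₊ : ℝ) * (1 - ε / 4) ^ m ≤ 4 / ε * (ε * δ / 4) :=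
        mul_le_mul hfloor (hpow.trans hexp) (pow_nonneg (by linarith) m) (by positivity)
    _ = δ := by field_simp

end LandmarkBucket

open LandmarkBucket

/-- with `m ≥ C·(1/ε)·log(1/(εδ))` i.i.d. landmark samples, with probability
at least `1 − δ`, the probability that a random pair `(S, S')` has `α·f(S) < f(S')` and yet
no pair of landmarks `S_i, S_j` satisfies `f(S) ≤ f(S_i)`, `α·f(S_i) < f(S_j)`, `f(S_j) ≤ f(S')`
is at most `ε`. -/
theorem landmark_bucket_claim :
    ∃ C : ℝ, 0 < C ∧
      ∀ (n : ℕ) (f : Finset (Fin n) → ℝ), (∀ S, 0 ≤ f S) →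
      ∀ α : ℝ, 1 ≤ α →
      ∀ D : Finset (Fin n) → ℝ, (∀ S, 0 ≤ D S) → (∑ S, D S) = 1 →
      ∀ ε δ : ℝ, 0 < ε → ε < 1 → 0 < δ → δ < 1 →
      ∀ m : ℕ, C * (1 / ε) * Real.log (1 / (ε * δ)) ≤ (m : ℝ) →
        1 - δ ≤ samplePr n m D (fun s =>
          pairPr n D (fun S S' =>
            α * f S < f S' ∧
            ¬ ∃ i j : Fin m, f S ≤ f (s i) ∧ α * f (s i) < f (s j) ∧ f (s j) ≤ f S') ≤ ε) := by
  refine ⟨12, by norm_num, ?_⟩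
  intro n f hf α hα D hD hD1 ε δ hε _ hδ hδ1 m hm
  rcases le_or_gt (1 / 2) ε with hε2 | hε2
  · calc 1 - δ ≤ samplePr n m D (fun _ => True) := by rw [samplePr_true hD1]; linarith
      _ ≤ _ := samplePr_mono hD fun _ _ =>
        (pairPr_mono hD fun S _ h => (le_mul_of_one_le_left (hf S) hα).trans_lt h.1).trans
          ((pairPr_lt_le_half hD hD1 f).trans hε2)
  · calc 1 - δ ≤ 1 - ⌊1 / (ε / 4)⌋₊ * (1 - ε / 4) ^ m := by
          linarith [floor_mul_one_sub_pow_le hε hε2 hδ hδ1.le hm]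
      _ ≤ samplePr n m D (IsNet f D (2 * (ε / 4))) :=
        one_sub_mul_le_samplePr_isNet hD hD1 f (by positivity)
      _ ≤ _ := samplePr_mono hD fun _ hs =>
        (pairPr_missed_le_of_isNet hD hD1 (by linarith) hs).trans (by linarith)
end

section
/- Let n ∈ ℕ, let f, p : 2^[n] → ℝ, and let γ > 0 satisfy 2^{−n}·Σ_{S⊆[n]} (f(S) − p(S))² ≤ γ². Then for every ξ ∈ (0,1), the fraction of ordered pairs of subsets on which f has gap more than 2γ·(1 + √(2/ξ)) but p reverses the order is at most ξ: 4^{−n}·|{(S₁,S₂) : S₁, S₂ ⊆ [n], f(S₁) + 2γ·(1 + √(2/ξ)) < f(S₂) and p(S₁) > p(S₂)}| ≤ ξ. -/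
open Finset

/-- if `f` and `p` are within squared L₂ distance `γ²` over the uniform
distribution on `2^[n]`, then the fraction of ordered pairs `(S₁, S₂)` with
`f(S₁) + 2γ·(1 + √(2/ξ)) < f(S₂)` but `p(S₁) > p(S₂)` is at most `ξ`. -/
theorem l2_close_implies_order_preserved (n : ℕ) (f p : Finset (Fin n) → ℝ)
    (γ : ℝ) (hγ : 0 < γ)
    (h : ((2 : ℝ) ^ n)⁻¹ * ∑ S : Finset (Fin n), (f S - p S) ^ 2 ≤ γ ^ 2)
    (ξ : ℝ) (hξ0 : 0 < ξ) (hξ1 : ξ < 1) :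
    ((4 : ℝ) ^ n)⁻¹ *
        ((Finset.univ.filter (fun P : Finset (Fin n) × Finset (Fin n) =>
          f P.1 + 2 * γ * (1 + Real.sqrt (2 / ξ)) < f P.2 ∧ p P.2 < p P.1)).card : ℝ)
      ≤ ξ := by
  set t := Real.sqrt (2 / ξ) with ht
  have ht0 : 0 ≤ t := Real.sqrt_nonneg _
  have ht2 : t ^ 2 = 2 / ξ := Real.sq_sqrt (by positivity)
  have h2n : (0 : ℝ) < 2 ^ n := by positivity
  have hsum : ∑ S : Finset (Fin n), (f S - p S) ^ 2 ≤ γ ^ 2 * 2 ^ n := by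
    have := mul_le_mul_of_nonneg_left h (le_of_lt h2n)
    rw [← mul_assoc, mul_inv_cancel₀ (ne_of_gt h2n), one_mul] at this
    linarith
  set B := Finset.univ.filter (fun S : Finset (Fin n) => γ * (1 + t) < |f S - p S|) with hB
  -- Markov bound on |B|
  have hBcard : (B.card : ℝ) * (γ * (1 + t)) ^ 2 ≤ γ ^ 2 * 2 ^ n := by
    have h1 : (B.card : ℝ) * (γ * (1 + t)) ^ 2 ≤ ∑ S ∈ B, (f S - p S) ^ 2 := by
      have := Finset.card_nsmul_le_sum B (fun S => (f S - p S) ^ 2) ((γ * (1 + t)) ^ 2)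
        (fun S hS => ?_)
      · rwa [nsmul_eq_mul] at this
      have hS' := (Finset.mem_filter.mp hS).2
      have habs : 0 ≤ |f S - p S| := abs_nonneg _
      show (γ * (1 + t)) ^ 2 ≤ (f S - p S) ^ 2
      nlinarith [sq_abs (f S - p S), mul_self_le_mul_self (show (0:ℝ) ≤ γ * (1 + t) by positivity) hS'.le]
    have h2 : ∑ S ∈ B, (f S - p S) ^ 2 ≤ ∑ S : Finset (Fin n), (f S - p S) ^ 2 :=
      Finset.sum_le_sum_of_subset_of_nonneg (Finset.subset_univ _)
        (fun i _ _ => sq_nonneg _)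
    linarith
  have hpos : (0 : ℝ) < (γ * (1 + t)) ^ 2 := by positivity
  have hBle : (B.card : ℝ) ≤ ξ / 2 * 2 ^ n := by
    have hquot : (B.card : ℝ) ≤ γ ^ 2 * 2 ^ n / (γ * (1 + t)) ^ 2 :=
      (le_div_iff₀ hpos).mpr hBcard
    have hkey : γ ^ 2 * 2 ^ n / (γ * (1 + t)) ^ 2 ≤ ξ / 2 * 2 ^ n := by
      rw [div_le_iff₀ hpos]
      have h1t : t ^ 2 ≤ (1 + t) ^ 2 := by nlinarith
      have h2ξ : 2 / ξ ≤ (1 + t) ^ 2 := ht2 ▸ h1t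
      have h2' : 2 ≤ ξ * (1 + t) ^ 2 := by
        have := (div_le_iff₀ hξ0).mp h2ξ
        linarith [this]
      have hg2 : γ ^ 2 * 2 ≤ γ ^ 2 * (ξ * (1 + t) ^ 2) :=
        mul_le_mul_of_nonneg_left h2' (sq_nonneg γ)
      nlinarith [mul_le_mul_of_nonneg_right hg2 h2n.le]
    linarith
  -- every bad pair has a coordinate in B
  set Bad := (Finset.univ.filter (fun P : Finset (Fin n) × Finset (Fin n) =>
      f P.1 + 2 * γ * (1 + t) < f P.2 ∧ p P.2 < p P.1)) with hBad
  have hsub : Bad ⊆ B ×ˢ Finset.univ ∪ Finset.univ ×ˢ B := by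
    intro P hP
    simp only [hBad, Finset.mem_filter, Finset.mem_univ, true_and] at hP
    obtain ⟨hf, hp⟩ := hP
    by_contra hc
    simp only [Finset.mem_union, Finset.mem_product, Finset.mem_univ, true_and, and_true,
      hB, Finset.mem_filter, not_or, not_lt] at hc
    obtain ⟨h1, h2⟩ := hc
    have a1 := abs_le.mp h1
    have a2 := abs_le.mp h2
    linarith [a1.1, a1.2, a2.1, a2.2]
  have hcardBad : (Bad.card : ℝ) ≤ ξ * 4 ^ n := by
    have hc1 : Bad.card ≤ (B ×ˢ (Finset.univ : Finset (Finset (Fin n)))).card +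
        ((Finset.univ : Finset (Finset (Fin n))) ×ˢ B).card :=
      le_trans (Finset.card_le_card hsub) (Finset.card_union_le _ _)
    have hcu : (Finset.univ : Finset (Finset (Fin n))).card = 2 ^ n := by
      simp [Fintype.card_finset]
    rw [Finset.card_product, Finset.card_product, hcu] at hc1
    have : (Bad.card : ℝ) ≤ (B.card : ℝ) * 2 ^ n + 2 ^ n * B.card := by
      exact_mod_cast hc1
    have h4 : (4 : ℝ) ^ n = 2 ^ n * 2 ^ n := by
      rw [← mul_pow]; norm_num
    nlinarith [hBle, h2n]
  have h4n : (0 : ℝ) < 4 ^ n := by positivity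
  rw [inv_mul_le_iff₀ h4n]
  linarith [hcardBad]
end

section
/- Let n ∈ ℕ and let f : 2^[n] → ℝ≥0 be a monotone submodular set function with f(∅) = 0. Then for every S ⊆ [n] and every integer m ≥ 1 there exists Q ⊆ S with |Q| ≤ ⌈|S|/m⌉ such that f(Q) ≤ f(S) ≤ m·f(Q). -/
open Finset

/-- A set function on `2^[n]` is monotone. -/
def Monot {n : ℕ} (f : Finset (Fin n) → ℝ) : Prop :=
  ∀ ⦃S T : Finset (Fin n)⦄, S ⊆ T → f S ≤ f T

/-- A set function on `2^[n]` is submodular: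
`f (S ∪ {i}) − f S ≥ f (T ∪ {i}) − f T` whenever `S ⊆ T`. -/
def Submod {n : ℕ} (f : Finset (Fin n) → ℝ) : Prop :=
  ∀ ⦃S T : Finset (Fin n)⦄, S ⊆ T → ∀ i : Fin n,
    f (insert i T) - f T ≤ f (insert i S) - f S

lemma subadd {n : ℕ} (f : Finset (Fin n) → ℝ) (hsub : Submod f) (h0 : f ∅ = 0) :
    ∀ A B : Finset (Fin n), f (A ∪ B) ≤ f A + f B := by
  intro A B
  induction A using Finset.induction_on with
  | empty => simp [h0]
  | @insert i A' hi IH =>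
    have h1 := hsub (Finset.subset_union_left (s₁ := A') (s₂ := B)) i
    have h2 : insert i A' ∪ B = insert i (A' ∪ B) := by
      ext x; simp [Finset.mem_insert, Finset.mem_union, or_assoc]
    rw [h2]
    linarith

/-- for a nonnegative monotone submodular `f` with `f(∅) = 0`, every `S ⊆ [n]`
and every integer `m ≥ 1` admit `Q ⊆ S` with `|Q| ≤ ⌈|S|/m⌉` and
`f(Q) ≤ f(S) ≤ m·f(Q)`. -/
theorem submodular_small_representative (n : ℕ) (f : Finset (Fin n) → ℝ)
    (hnn : ∀ S, 0 ≤ f S) (hmono : Monot f) (hsub : Submod f) (h0 : f ∅ = 0) :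
    ∀ S : Finset (Fin n), ∀ m : ℕ, 1 ≤ m →
      ∃ Q ⊆ S, Q.card ≤ ⌈(S.card : ℝ) / (m : ℝ)⌉₊ ∧
        f Q ≤ f S ∧ f S ≤ (m : ℝ) * f Q := by
  intro S m
  induction m generalizing S with
  | zero => omega
  | succ m IH =>
    intro _
    rcases Nat.eq_zero_or_pos m with hm0 | hm1
    · subst hm0
      refine ⟨S, Finset.Subset.refl S, ?_, le_refl _, by norm_num⟩
      simp
    · -- m ≥ 1, total multiplier m+1
      set k := ⌈(S.card : ℝ) / ((m+1 : ℕ) : ℝ)⌉₊ with hk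
      obtain ⟨Q₀, hQ₀S, hQ₀card⟩ := Finset.exists_subset_card_eq
        (s := S) (n := min k S.card) (min_le_right _ _)
      set T := S \ Q₀ with hT
      have hTcard : T.card = S.card - min k S.card := by
        rw [hT, Finset.card_sdiff_of_subset hQ₀S, hQ₀card]
      obtain ⟨Q', hQ'T, hQ'card, hQ'le, hQ'ge⟩ := IH T hm1
      have hTS : T ⊆ S := Finset.sdiff_subset
      -- key cardinal bound : ⌈T.card/m⌉ ≤ k
      have hScard : S.card ≤ k * (m+1) := by
        have h1 : (S.card : ℝ) / ((m+1 : ℕ) : ℝ) ≤ (k : ℝ) := Nat.le_ceil _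
        have hp : (0:ℝ) < ((m+1 : ℕ) : ℝ) := by positivity
        rw [div_le_iff₀ hp] at h1
        push_cast at h1
        have : (S.card : ℝ) ≤ ((k * (m+1) : ℕ) : ℝ) := by push_cast; linarith
        exact_mod_cast this
      have hQ'k : Q'.card ≤ k := by
        refine hQ'card.trans ?_
        rw [Nat.ceil_le]
        have hp : (0:ℝ) < (m : ℝ) := by exact_mod_cast hm1
        rw [div_le_iff₀ hp]
        have h2 : T.card ≤ k * m := by
          rcases le_or_gt k S.card with h | h
          · rw [hTcard, min_eq_left h]
            have hr : k * (m+1) = k * m + k := by ring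
            omega
          · rw [hTcard, min_eq_right h.le]; simp
        calc (T.card : ℝ) ≤ ((k * m : ℕ) : ℝ) := by exact_mod_cast h2
          _ = (k : ℝ) * m := by push_cast; ring
      have hQ₀k : Q₀.card ≤ k := by rw [hQ₀card]; exact min_le_left _ _
      have hunion : S = Q₀ ∪ T := by
        rw [hT, Finset.union_sdiff_of_subset hQ₀S]
      have hfS : f S ≤ f Q₀ + f T := by
        rw [hunion]; exact subadd f hsub h0 Q₀ T
      rcases le_total (f Q₀) (f Q') with hle | hle
      · refine ⟨Q', hQ'T.trans hTS, hQ'k, hmono (hQ'T.trans hTS), ?_⟩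
        push_cast
        calc f S ≤ f Q₀ + f T := hfS
          _ ≤ f Q' + (m : ℝ) * f Q' := by linarith
          _ = ((m : ℝ) + 1) * f Q' := by ring
      · refine ⟨Q₀, hQ₀S, hQ₀k, hmono hQ₀S, ?_⟩
        push_cast
        have := hnn Q₀
        calc f S ≤ f Q₀ + f T := hfS
          _ ≤ f Q₀ + (m : ℝ) * f Q' := by linarith
          _ ≤ f Q₀ + (m : ℝ) * f Q₀ := by
              have hm : (0:ℝ) ≤ (m:ℝ) := by positivity
              nlinarith
          _ = ((m : ℝ) + 1) * f Q₀ := by ring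
end
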